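/- The strategy iteration algorithm for priced games terminates: the process that repeatedly applies improving sets for Player 1 (followed in an inner loop by repeatedly applying improving sets for Player 2 until Player 2 has none) cannot revisit any strategy profile, and hence terminates in an optimal strategy profile with respect to which neither player has an improving switch. -/

import Mathlib

noncomputable section

open Classical
open scoped ENNReal

namespace PTGpaper

/-- A priced game: finitely many states partitioned between Player 1 (owner `0`,
the minimizer) and Player 2 (owner `1`, the maximizer), actions with nonnegative
(extended real) costs and destinations in the states or the terminal state
(modeled by `none`). -/
structure PricedGame where
  n : ℕ
  owner : Fin n → Fin 2
  A : Fin n → Finset ℕ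
  cost : ℕ → ℝ≥0∞
  dest : ℕ → Option (Fin n)

namespace PricedGame

variable (G : PricedGame)

/-- A positional strategy profile: a choice of an available action in each state. -/
def Valid (σ : Fin G.n → ℕ) : Prop :=
  ∀ k, σ k ∈ G.A k

def step (σ : Fin G.n → ℕ) (o : Option (Fin G.n)) : Option (Fin G.n) :=
  o.bind fun k => G.dest (σ k)

/-- The state reached after `t` steps of the path `P_{k,σ}` (`none` = terminal). -/
def reach (σ : Fin G.n → ℕ) (k : Fin G.n) (t : ℕ) : Option (Fin G.n) :=
  (G.step σ)^[t] (some k)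

/-- The path from `k` under `σ` reaches the terminal state `⊥`. -/
def Terminates (σ : Fin G.n → ℕ) (k : Fin G.n) : Prop :=
  ∃ t, G.reach σ k t = none

/-- Payoff `u(k,σ)`: total cost of the path from `k` to `⊥`, or `∞` if `⊥` is unreached. -/
def payoff (σ : Fin G.n → ℕ) (k : Fin G.n) : ℝ≥0∞ :=
  if G.Terminates σ k then
    ∑' t : ℕ, (G.reach σ k t).elim 0 (fun k' => G.cost (σ k'))
  else ⊤

/-- Length `ℓ(k,σ)` of the path from `k` to `⊥` (`⊤` if `⊥` is unreached). -/
def len (σ : Fin G.n → ℕ) (k : Fin G.n) : ℕ∞ :=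
  ⨅ (t : ℕ) (_ : G.reach σ k t = none), (t : ℕ∞)

def payoffO (σ : Fin G.n → ℕ) (o : Option (Fin G.n)) : ℝ≥0∞ :=
  o.elim 0 (G.payoff σ)

def lenO (σ : Fin G.n → ℕ) (o : Option (Fin G.n)) : ℕ∞ :=
  o.elim 0 (G.len σ)

/-- The valuation `ν(k,σ) = (u(k,σ), ℓ(k,σ))`, ordered lexicographically. -/
def valn (σ : Fin G.n → ℕ) (k : Fin G.n) : ℝ≥0∞ ×ₗ ℕ∞ :=
  toLex (G.payoff σ k, G.len σ k)

/-- The valuation obtained by first using action `j` and then following `σ`. -/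
def cand (σ : Fin G.n → ℕ) (j : ℕ) : ℝ≥0∞ ×ₗ ℕ∞ :=
  toLex (G.cost j + G.payoffO σ (G.dest j), 1 + G.lenO σ (G.dest j))

/-- `j ∈ A k` is an improving switch for Player 1 (the minimizer) at `k` w.r.t. `σ`. -/
def Improving1 (σ : Fin G.n → ℕ) (k : Fin G.n) (j : ℕ) : Prop :=
  j ∈ G.A k ∧ G.cand σ j < G.valn σ k

/-- `j ∈ A k` is an improving switch for Player 2 (the maximizer) at `k` w.r.t. `σ`. -/
def Improving2 (σ : Fin G.n → ℕ) (k : Fin G.n) (j : ℕ) : Prop :=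
  j ∈ G.A k ∧ G.valn σ k < G.cand σ j

/-- Strongly improving switch for Player 1: strictly smaller payoff. -/
def StronglyImproving1 (σ : Fin G.n → ℕ) (k : Fin G.n) (j : ℕ) : Prop :=
  j ∈ G.A k ∧ G.cost j + G.payoffO σ (G.dest j) < G.payoff σ k

/-- Strongly improving switch for Player 2: strictly larger payoff. -/
def StronglyImproving2 (σ : Fin G.n → ℕ) (k : Fin G.n) (j : ℕ) : Prop :=
  j ∈ G.A k ∧ G.payoff σ k < G.cost j + G.payoffO σ (G.dest j)

/-- Combine a Player 1 strategy and a Player 2 strategy into a profile. -/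
def combine (σ₁ σ₂ : Fin G.n → ℕ) (k : Fin G.n) : ℕ :=
  if G.owner k = 0 then σ₁ k else σ₂ k

/-- The upper value `min_{σ₁} max_{σ₂} u(k,σ₁,σ₂)`. -/
def upperVal (k : Fin G.n) : ℝ≥0∞ :=
  ⨅ σ₁ : {σ : Fin G.n → ℕ // G.Valid σ}, ⨆ σ₂ : {σ : Fin G.n → ℕ // G.Valid σ},
    G.payoff (G.combine σ₁ σ₂) k

/-- The lower value `max_{σ₂} min_{σ₁} u(k,σ₁,σ₂)`. -/
def lowerVal (k : Fin G.n) : ℝ≥0∞ :=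
  ⨆ σ₂ : {σ : Fin G.n → ℕ // G.Valid σ}, ⨅ σ₁ : {σ : Fin G.n → ℕ // G.Valid σ},
    G.payoff (G.combine σ₁ σ₂) k

/-- `σ₁` is a best response of Player 1 to `σ₂`: it minimizes the payoff at every state. -/
def BestResponse1 (σ₁ σ₂ : Fin G.n → ℕ) : Prop :=
  G.Valid σ₁ ∧ ∀ σ₁' : Fin G.n → ℕ, G.Valid σ₁' →
    ∀ k, G.payoff (G.combine σ₁ σ₂) k ≤ G.payoff (G.combine σ₁' σ₂) k

/-- `σ₂` is a best response of Player 2 to `σ₁`: it maximizes the payoff at every state. -/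
def BestResponse2 (σ₁ σ₂ : Fin G.n → ℕ) : Prop :=
  G.Valid σ₂ ∧ ∀ σ₂' : Fin G.n → ℕ, G.Valid σ₂' →
    ∀ k, G.payoff (G.combine σ₁ σ₂') k ≤ G.payoff (G.combine σ₁ σ₂) k

/-- `σ₁` is an optimal Player 1 strategy: it attains the upper value at every state. -/
def Optimal1 (σ₁ : Fin G.n → ℕ) : Prop :=
  G.Valid σ₁ ∧ ∀ k,
    (⨆ σ₂ : {σ : Fin G.n → ℕ // G.Valid σ}, G.payoff (G.combine σ₁ σ₂) k) = G.upperVal k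

/-- `σ₂` is an optimal Player 2 strategy: it attains the lower value at every state. -/
def Optimal2 (σ₂ : Fin G.n → ℕ) : Prop :=
  G.Valid σ₂ ∧ ∀ k,
    (⨅ σ₁ : {σ : Fin G.n → ℕ // G.Valid σ}, G.payoff (G.combine σ₁ σ₂) k) = G.lowerVal k

/-- `σ[B]`: switch `σ` to the actions prescribed by the partial assignment `β`
(at most one action per state). -/
def switch (σ : Fin G.n → ℕ) (β : Fin G.n → Option ℕ) (k : Fin G.n) : ℕ :=
  (β k).getD (σ k)

/-- `β` represents an improving set `B` for Player 1: it contains at least one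
improving switch for Player 1 and no improving switch for Player 2. -/
def ImprovingSet1 (σ : Fin G.n → ℕ) (β : Fin G.n → Option ℕ) : Prop :=
  (∀ k j, β k = some j → j ∈ G.A k) ∧
  (∃ k j, β k = some j ∧ G.Improving1 σ k j) ∧
  (∀ k j, β k = some j → ¬ G.Improving2 σ k j)

/-- `β` represents an improving set `B` for Player 2. -/
def ImprovingSet2 (σ : Fin G.n → ℕ) (β : Fin G.n → Option ℕ) : Prop :=
  (∀ k j, β k = some j → j ∈ G.A k) ∧
  (∃ k j, β k = some j ∧ G.Improving2 σ k j) ∧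
  (∀ k j, β k = some j → ¬ G.Improving1 σ k j)

end PricedGame

end PTGpaper

namespace PTGpaper

namespace PricedGame

variable (G : PricedGame)

/-- One step of the strategy iteration algorithm: either an inner-loop step, applying
an improving set for Player 2 (within Player-2 states), or an outer-loop step, applying
an improving set for Player 1 (within Player-1 states), which is only performed when
Player 2 has no improving switches. -/
def AlgStep (σ σ' : Fin G.n → ℕ) : Prop :=
  (∃ β, (∀ k, β k ≠ none → G.owner k = 1) ∧ G.ImprovingSet2 σ β ∧ σ' = G.switch σ β) ∨
  ((∀ k j, G.owner k = 1 → ¬ G.Improving2 σ k j) ∧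
    ∃ β, (∀ k, β k ≠ none → G.owner k = 0) ∧ G.ImprovingSet1 σ β ∧ σ' = G.switch σ β)

end PricedGame

open PricedGame

/-! Order profiles by the potential `(u, ℓ)`: valuation vectors compared pointwise, then
lexicographically. Applying an improving set of Player 2 strictly raises the potential.
Once Player 2 has no improving switch, every Player-2 action is at best neutral for
Player 2 when measured with the current valuations, so after a Player-1 improving set the
potential stays strictly below its value at the outer step, however Player 2 responds.
Hence there is no infinite run at all: along one, either the profiles at the infinitely
many outer steps (potential decreasing) or those of a tail of inner steps (increasing) would
be pairwise distinct, which the finiteness of the strategy space forbids. A profile without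
improving switches is a saddle point of the payoff, hence optimal for both players. -/

namespace PricedGame

variable {G : PricedGame} {σ ρ : Fin G.n → ℕ}

theorem wellFounded_lt_comp_of_finite {α β : Type*} [Finite α] [Preorder β] (f : α → β) :
    WellFounded fun a b => f a < f b := by
  have : IsTrans α fun a b => f a < f b := ⟨fun _ _ _ => lt_trans⟩
  have : Std.Irrefl fun a b : α => f a < f b := ⟨fun _ => lt_irrefl _⟩
  exact Finite.wellFounded_of_trans_of_irrefl _

theorem lt_of_one_add_le_of_ne_top {x y : ℕ∞} (h : 1 + x ≤ y) (hy : y ≠ ⊤) : x < y :=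
  (ENat.add_one_le_iff' hy).1 (by rwa [add_comm])

@[simp]
theorem payoffO_some (σ : Fin G.n → ℕ) (d : Fin G.n) : G.payoffO σ (some d) = G.payoff σ d :=
  rfl

@[simp]
theorem lenO_some (σ : Fin G.n → ℕ) (d : Fin G.n) : G.lenO σ (some d) = G.len σ d :=
  rfl

theorem step_iterate_none (σ : Fin G.n → ℕ) (t : ℕ) : (G.step σ)^[t] none = none :=
  Function.iterate_fixed rfl t

theorem step_iterate_succ_some (σ : Fin G.n → ℕ) (k : Fin G.n) (t : ℕ) :
    (G.step σ)^[t + 1] (some k) = (G.step σ)^[t] (G.dest (σ k)) :=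
  Function.iterate_succ_apply _ _ _

theorem exists_step_iterate_some_iff (σ : Fin G.n → ℕ) (k : Fin G.n) :
    (∃ t, (G.step σ)^[t] (some k) = none) ↔ ∃ t, (G.step σ)^[t] (G.dest (σ k)) = none := by
  refine ⟨fun ⟨t, ht⟩ => ?_, fun ⟨t, ht⟩ => ⟨t + 1, by rwa [step_iterate_succ_some]⟩⟩
  cases t with
  | zero => exact absurd ht (Option.some_ne_none k)
  | succ t => exact ⟨t, by rwa [step_iterate_succ_some] at ht⟩

theorem payoffO_eq_ite (σ : Fin G.n → ℕ) (o : Option (Fin G.n)) :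
    G.payoffO σ o = if ∃ t, (G.step σ)^[t] o = none then
      ∑' t, ((G.step σ)^[t] o).elim 0 (fun k => G.cost (σ k)) else ⊤ := by
  cases o with
  | none => simp [payoffO, step_iterate_none]
  | some k => rfl

theorem lenO_eq_iInf (σ : Fin G.n → ℕ) (o : Option (Fin G.n)) :
    G.lenO σ o = ⨅ (t : ℕ) (_ : (G.step σ)^[t] o = none), (t : ℕ∞) := by
  cases o with
  | none => exact (nonpos_iff_eq_zero.1 (iInf₂_le 0 (step_iterate_none σ 0))).symm
  | some k => rfl

theorem payoff_eq (σ : Fin G.n → ℕ) (k : Fin G.n) :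
    G.payoff σ k = G.cost (σ k) + G.payoffO σ (G.dest (σ k)) := by
  rw [show G.payoff σ k = G.payoffO σ (some k) from rfl, payoffO_eq_ite, payoffO_eq_ite,
    exists_step_iterate_some_iff]
  split_ifs
  · rw [tsum_eq_zero_add' ENNReal.summable]
    simp only [step_iterate_succ_some]
    rfl
  · exact (add_top _).symm

theorem len_eq (σ : Fin G.n → ℕ) (k : Fin G.n) :
    G.len σ k = 1 + G.lenO σ (G.dest (σ k)) := by
  rw [lenO_eq_iInf, ENat.add_iInf₂]
  refine le_antisymm (le_iInf₂ fun t ht => ?_) (le_iInf₂ fun t ht => ?_)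
  · refine (iInf₂_le (t + 1) (by rwa [reach, step_iterate_succ_some])).trans ?_
    push_cast
    rw [add_comm]
  · cases t with
    | zero => exact absurd ht (Option.some_ne_none k)
    | succ t =>
      refine (iInf₂_le t (by rwa [reach, step_iterate_succ_some] at ht)).trans ?_
      push_cast
      rw [add_comm]

theorem valn_eq_cand_self (σ : Fin G.n → ℕ) (k : Fin G.n) : G.valn σ k = G.cand σ (σ k) := by
  rw [valn, cand, ← payoff_eq, ← len_eq]

theorem payoff_eq_top_of_len_eq_top {k : Fin G.n} (h : G.len σ k = ⊤) : G.payoff σ k = ⊤ := by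
  rw [payoff, if_neg]
  rintro ⟨t, ht⟩
  exact ENat.natCast_ne_top t (top_le_iff.1 (h ▸ iInf₂_le t ht))

theorem len_lt_len_of_dest_eq_some {k d : Fin G.n} (hd : G.dest (σ k) = some d)
    (hk : G.len σ k ≠ ⊤) : G.len σ d < G.len σ k :=
  lt_of_one_add_le_of_ne_top (by rw [len_eq σ k, hd, lenO_some]) hk

theorem payoffO_le_payoffO {o : Option (Fin G.n)}
    (h : ∀ d, o = some d → G.payoff ρ d ≤ G.payoff σ d) : G.payoffO ρ o ≤ G.payoffO σ o := by
  cases o with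
  | none => exact le_rfl
  | some d => exact h d rfl

theorem lenO_le_lenO {o : Option (Fin G.n)}
    (h : ∀ d, o = some d → G.len ρ d ≤ G.len σ d) : G.lenO ρ o ≤ G.lenO σ o := by
  cases o with
  | none => exact le_rfl
  | some d => exact h d rfl

theorem cand_mono (hu : G.payoff ρ ≤ G.payoff σ) (hl : G.len ρ ≤ G.len σ) (j : ℕ) :
    G.cand ρ j ≤ G.cand σ j := by
  have hu' := payoffO_le_payoffO (o := G.dest j) fun d _ => hu d
  have hl' := lenO_le_lenO (o := G.dest j) fun d _ => hl d
  exact Prod.Lex.toLex_le_toLex'.2 ⟨by dsimp only; gcongr, fun _ => by dsimp only; gcongr⟩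

theorem valn_lt_of_cand_le {j : ℕ} {k d : Fin G.n} (hj : G.cand σ j ≤ G.valn σ k)
    (hd : G.dest j = some d) (hk : G.payoff σ k ≠ ⊤) : G.valn σ d < G.valn σ k := by
  obtain ⟨hu, hl⟩ := Prod.Lex.toLex_le_toLex'.1 hj
  simp only [hd, payoffO_some, lenO_some] at hu hl
  refine Prod.Lex.toLex_lt_toLex'.2 ⟨le_add_self.trans hu, fun heq => ?_⟩
  have hdk : G.payoff σ d = G.payoff σ k := heq
  exact lt_of_one_add_le_of_ne_top (hl (le_antisymm hu (hdk.symm.le.trans le_add_self)))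
    fun h => hk (payoff_eq_top_of_len_eq_top h)

theorem payoff_le_of_cand_le (h : ∀ m, G.cand σ (ρ m) ≤ G.valn σ m) :
    G.payoff ρ ≤ G.payoff σ := by
  intro k
  -- A move of `ρ` strictly lowers the σ-valuation while the σ-payoff is finite, and there are
  -- only finitely many states.
  induction k using (wellFounded_lt_comp_of_finite (G.valn σ)).induction with
  | _ k ih =>
  by_cases hk : G.payoff σ k = ⊤
  · exact hk ▸ le_top
  calc G.payoff ρ k = G.cost (ρ k) + G.payoffO ρ (G.dest (ρ k)) := payoff_eq ρ k
    _ ≤ G.cost (ρ k) + G.payoffO σ (G.dest (ρ k)) := by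
      gcongr
      exact payoffO_le_payoffO fun d hd => ih d (valn_lt_of_cand_le (h k) hd hk)
    _ ≤ G.payoff σ k := (Prod.Lex.toLex_le_toLex'.1 (h k)).1

theorem payoff_le_of_le_cand (h : ∀ m, G.valn σ m ≤ G.cand σ (ρ m)) :
    G.payoff σ ≤ G.payoff ρ := by
  intro k
  induction k using (wellFounded_lt_comp_of_finite (G.len ρ)).induction with
  | _ k ih =>
  by_cases hk : G.len ρ k = ⊤
  · exact (payoff_eq_top_of_len_eq_top hk).symm ▸ le_top
  calc G.payoff σ k ≤ G.cost (ρ k) + G.payoffO σ (G.dest (ρ k)) :=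
        (Prod.Lex.toLex_le_toLex'.1 (h k)).1
    _ ≤ G.cost (ρ k) + G.payoffO ρ (G.dest (ρ k)) := by
      gcongr
      exact payoffO_le_payoffO fun d hd => ih d (len_lt_len_of_dest_eq_some hd hk)
    _ = G.payoff ρ k := (payoff_eq ρ k).symm

theorem cost_add_payoffO_eq_of_payoff_eq (hu : G.payoff ρ = G.payoff σ) (m : Fin G.n) :
    G.cost (ρ m) + G.payoffO σ (G.dest (ρ m)) = G.payoff σ m := by
  simp only [payoffO, ← hu]
  exact (payoff_eq ρ m).symm

theorem len_le_of_cand_le (h : ∀ m, G.cand σ (ρ m) ≤ G.valn σ m)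
    (hu : G.payoff ρ = G.payoff σ) : G.len ρ ≤ G.len σ := by
  have hstep (m : Fin G.n) : 1 + G.lenO σ (G.dest (ρ m)) ≤ G.len σ m :=
    (Prod.Lex.toLex_le_toLex'.1 (h m)).2 (cost_add_payoffO_eq_of_payoff_eq hu m)
  intro k
  induction k using (wellFounded_lt_comp_of_finite (G.len σ)).induction with
  | _ k ih =>
  by_cases hk : G.len σ k = ⊤
  · exact hk ▸ le_top
  calc G.len ρ k = 1 + G.lenO ρ (G.dest (ρ k)) := len_eq ρ k
    _ ≤ 1 + G.lenO σ (G.dest (ρ k)) := by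
      gcongr
      exact lenO_le_lenO fun d hd =>
        ih d (lt_of_one_add_le_of_ne_top (by simpa [hd] using hstep k) hk)
    _ ≤ G.len σ k := hstep k

theorem len_le_of_le_cand (h : ∀ m, G.valn σ m ≤ G.cand σ (ρ m))
    (hu : G.payoff ρ = G.payoff σ) : G.len σ ≤ G.len ρ := by
  have hstep (m : Fin G.n) : G.len σ m ≤ 1 + G.lenO σ (G.dest (ρ m)) :=
    (Prod.Lex.toLex_le_toLex'.1 (h m)).2 (cost_add_payoffO_eq_of_payoff_eq hu m).symm
  intro k
  induction k using (wellFounded_lt_comp_of_finite (G.len ρ)).induction with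
  | _ k ih =>
  by_cases hk : G.len ρ k = ⊤
  · exact hk ▸ le_top
  calc G.len σ k ≤ 1 + G.lenO σ (G.dest (ρ k)) := hstep k
    _ ≤ 1 + G.lenO ρ (G.dest (ρ k)) := by
      gcongr
      exact lenO_le_lenO fun d hd => ih d (len_lt_len_of_dest_eq_some hd hk)
    _ = G.len ρ k := (len_eq ρ k).symm

variable (G) in
def potential (σ : Fin G.n → ℕ) : (Fin G.n → ℝ≥0∞) ×ₗ (Fin G.n → ℕ∞) :=
  toLex (G.payoff σ, G.len σ)

theorem potential_lt_of_valn_lt {k₀ : Fin G.n} (hu : G.payoff ρ ≤ G.payoff σ)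
    (hl : G.payoff ρ = G.payoff σ → G.len ρ ≤ G.len σ)
    (hk₀ : G.payoff ρ = G.payoff σ → G.valn ρ k₀ < G.valn σ k₀) :
    G.potential ρ < G.potential σ := by
  refine Prod.Lex.toLex_lt_toLex'.2 ⟨hu, fun heq => lt_of_le_not_ge (hl heq) fun hge => ?_⟩
  exact ((Prod.Lex.toLex_lt_toLex'.1 (hk₀ heq)).2 (congrFun heq k₀)).not_ge (hge k₀)

theorem potential_lt_of_cand_le (h : ∀ m, G.cand σ (ρ m) ≤ G.valn σ m) {k₀ : Fin G.n}
    (hk₀ : G.cand σ (ρ k₀) < G.valn σ k₀) : G.potential ρ < G.potential σ := by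
  have hl := len_le_of_cand_le h
  refine potential_lt_of_valn_lt (k₀ := k₀) (payoff_le_of_cand_le h) hl fun heq => ?_
  calc G.valn ρ k₀ = G.cand ρ (ρ k₀) := valn_eq_cand_self ρ k₀
    _ ≤ G.cand σ (ρ k₀) := cand_mono heq.le (hl heq) _
    _ < G.valn σ k₀ := hk₀

theorem potential_lt_of_le_cand (h : ∀ m, G.valn σ m ≤ G.cand σ (ρ m)) {k₀ : Fin G.n}
    (hk₀ : G.valn σ k₀ < G.cand σ (ρ k₀)) : G.potential σ < G.potential ρ := by
  have hl (heq : G.payoff σ = G.payoff ρ) := len_le_of_le_cand h heq.symm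
  refine potential_lt_of_valn_lt (k₀ := k₀) (payoff_le_of_le_cand h) hl fun heq => ?_
  calc G.valn σ k₀ < G.cand σ (ρ k₀) := hk₀
    _ ≤ G.cand ρ (ρ k₀) := cand_mono heq.le (hl heq) _
    _ = G.valn ρ k₀ := (valn_eq_cand_self ρ k₀).symm

variable (G) in
def NoImprovingSwitch1 (σ : Fin G.n → ℕ) : Prop :=
  ∀ k j, G.owner k = 0 → ¬ G.Improving1 σ k j

variable (G) in
def NoImprovingSwitch2 (σ : Fin G.n → ℕ) : Prop :=
  ∀ k j, G.owner k = 1 → ¬ G.Improving2 σ k j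

theorem valn_le_cand_of_not_improving1 {k : Fin G.n} {j : ℕ} (hj : j ∈ G.A k)
    (h : ¬ G.Improving1 σ k j) : G.valn σ k ≤ G.cand σ j :=
  not_lt.1 fun hlt => h ⟨hj, hlt⟩

theorem cand_le_valn_of_not_improving2 {k : Fin G.n} {j : ℕ} (hj : j ∈ G.A k)
    (h : ¬ G.Improving2 σ k j) : G.cand σ j ≤ G.valn σ k :=
  not_lt.1 fun hlt => h ⟨hj, hlt⟩

theorem potential_lt_switch_of_improvingSet2 {β : Fin G.n → Option ℕ}
    (hβ : G.ImprovingSet2 σ β) : G.potential σ < G.potential (G.switch σ β) := by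
  obtain ⟨hA, ⟨k₀, j₀, hk₀, himp⟩, hno1⟩ := hβ
  refine potential_lt_of_le_cand (fun m => ?_) (k₀ := k₀) (by simpa [switch, hk₀] using himp.2)
  cases hm : β m with
  | none => simpa [switch, hm] using (valn_eq_cand_self σ m).le
  | some j => simpa [switch, hm] using valn_le_cand_of_not_improving1 (hA m j hm) (hno1 m j hm)

/-- As Player 2 has no improving switch at `τ`, no Player-2 action of `σ` is better than `τ`'s
in the valuation of `τ`; only the Player-1 switch is felt, and it is improving. -/
theorem potential_lt_of_improvingSet1 {τ : Fin G.n → ℕ} {β : Fin G.n → Option ℕ}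
    (hτ : G.NoImprovingSwitch2 τ) (hsupp : ∀ k, β k ≠ none → G.owner k = 0)
    (hβ : G.ImprovingSet1 τ β) (hσ : G.Valid σ)
    (hagree : ∀ k, G.owner k = 0 → σ k = G.switch τ β k) : G.potential σ < G.potential τ := by
  obtain ⟨hA, ⟨k₀, j₀, hk₀, himp⟩, hno2⟩ := hβ
  have hk₀' : G.owner k₀ = 0 := hsupp k₀ (by simp [hk₀])
  refine potential_lt_of_cand_le (fun m => ?_) (k₀ := k₀)
    (by simpa [hagree k₀ hk₀', switch, hk₀] using himp.2)
  by_cases hm : G.owner m = 0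
  · rw [hagree m hm]
    cases hβm : β m with
    | none => simpa [switch, hβm] using (valn_eq_cand_self τ m).ge
    | some j =>
      simpa [switch, hβm] using cand_le_valn_of_not_improving2 (hA m j hβm) (hno2 m j hβm)
  · exact cand_le_valn_of_not_improving2 (hσ m) (hτ m _ (Fin.eq_one_of_ne_zero _ hm))

namespace AlgStep

variable {σ' : Fin G.n → ℕ}

theorem exists_improvingSet2 (h : G.AlgStep σ σ') (hσ : ¬ G.NoImprovingSwitch2 σ) :
    ∃ β, (∀ k, β k ≠ none → G.owner k = 1) ∧ G.ImprovingSet2 σ β ∧ σ' = G.switch σ β :=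
  h.resolve_right fun h' => hσ h'.1

theorem exists_improvingSet1 (h : G.AlgStep σ σ') (hσ : G.NoImprovingSwitch2 σ) :
    ∃ β, (∀ k, β k ≠ none → G.owner k = 0) ∧ G.ImprovingSet1 σ β ∧ σ' = G.switch σ β := by
  refine (h.resolve_left ?_).2
  rintro ⟨β, hsupp, ⟨-, ⟨k, j, hk, himp⟩, -⟩, -⟩
  exact hσ k j (hsupp k (by simp [hk])) himp

theorem potential_lt (h : G.AlgStep σ σ') (hσ : ¬ G.NoImprovingSwitch2 σ) :
    G.potential σ < G.potential σ' := by
  obtain ⟨β, -, hβ, rfl⟩ := h.exists_improvingSet2 hσ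
  exact potential_lt_switch_of_improvingSet2 hβ

theorem apply_eq_of_owner_eq_zero (h : G.AlgStep σ σ') (hσ : ¬ G.NoImprovingSwitch2 σ)
    {k : Fin G.n} (hk : G.owner k = 0) : σ' k = σ k := by
  obtain ⟨β, hsupp, -, rfl⟩ := h.exists_improvingSet2 hσ
  have hβk : β k = none := by
    by_contra hne
    exact absurd (hk.symm.trans (hsupp k hne)) (by decide)
  simp [switch, hβk]

end AlgStep

section Run

variable {f : ℕ → Fin G.n → ℕ}

theorem exists_last_outer_step (hrun : ∀ t, G.AlgStep (f t) (f (t + 1))) {s r : ℕ}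
    (hs : G.NoImprovingSwitch2 (f s)) (hsr : s < r) :
    ∃ q, s ≤ q ∧ q < r ∧ G.NoImprovingSwitch2 (f q) ∧
      ∀ k, G.owner k = 0 → f r k = f (q + 1) k := by
  induction r, hsr using Nat.le_induction with
  | base => exact ⟨s, le_rfl, lt_add_one s, hs, fun _ _ => rfl⟩
  | succ r hsr ih =>
    by_cases hr : G.NoImprovingSwitch2 (f r)
    · exact ⟨r, Nat.le_of_succ_le hsr, lt_add_one r, hr, fun _ _ => rfl⟩
    · obtain ⟨q, hsq, hqr, hq, hagree⟩ := ih
      exact ⟨q, hsq, hqr.trans (lt_add_one r), hq, fun k hk =>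
        ((hrun r).apply_eq_of_owner_eq_zero hr hk).trans (hagree k hk)⟩

theorem potential_lt_of_noImprovingSwitch2 (hv : ∀ t, G.Valid (f t))
    (hrun : ∀ t, G.AlgStep (f t) (f (t + 1))) {s r : ℕ} (hs : G.NoImprovingSwitch2 (f s))
    (hsr : s < r) : G.potential (f r) < G.potential (f s) := by
  induction r using Nat.strong_induction_on with
  | _ r ih =>
  obtain ⟨q, hsq, hqr, hq, hagree⟩ := exists_last_outer_step hrun hs hsr
  obtain ⟨β, hsupp, hβ, hstep⟩ := (hrun q).exists_improvingSet1 hq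
  have hlt : G.potential (f r) < G.potential (f q) :=
    potential_lt_of_improvingSet1 hq hsupp hβ (hv r) fun k hk =>
      (hagree k hk).trans (congrFun hstep k)
  rcases hsq.eq_or_lt with rfl | hsq
  · exact hlt
  · exact hlt.trans (ih q hqr hsq)

end Run

theorem finite_setOf_valid : {σ | G.Valid σ}.Finite :=
  (Set.Finite.pi fun k => (G.A k).finite_toSet).subset fun _ hσ => Set.mem_univ_pi.2 hσ

theorem not_injOn_of_valid {g : ℕ → Fin G.n → ℕ} (hv : ∀ t, G.Valid (g t)) {S : Set ℕ}
    (hS : S.Infinite) : ¬ S.InjOn g := fun hinj =>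
  let ⟨_, hx, _, hy, hne, heq⟩ := hS.exists_ne_map_eq_of_mapsTo (fun t _ => hv t)
    finite_setOf_valid
  hne (hinj hx hy heq)

theorem not_forall_algStep {f : ℕ → Fin G.n → ℕ} (hv : ∀ t, G.Valid (f t)) :
    ¬ ∀ t, G.AlgStep (f t) (f (t + 1)) := by
  intro hrun
  by_cases hS : {s | G.NoImprovingSwitch2 (f s)}.Infinite
  · have hanti : StrictAntiOn (G.potential ∘ f) {s | G.NoImprovingSwitch2 (f s)} :=
      fun s hs _ _ hsr => potential_lt_of_noImprovingSwitch2 hv hrun hs hsr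
    exact not_injOn_of_valid hv hS hanti.injOn.of_comp
  · obtain ⟨T, hT⟩ := (Set.not_infinite.1 hS).bddAbove
    have hmono : StrictMono fun t => G.potential (f (T + 1 + t)) :=
      strictMono_nat_of_lt_succ fun t => (hrun _).potential_lt fun h => by
        have := hT h
        omega
    exact not_injOn_of_valid (fun t => hv (T + 1 + t)) Set.infinite_univ
      (hmono.injective.of_comp (f := G.potential)).injOn

theorem payoff_combine_le (hσ : G.NoImprovingSwitch2 σ) {σ₂ : Fin G.n → ℕ} (hσ₂ : G.Valid σ₂) :
    G.payoff (G.combine σ σ₂) ≤ G.payoff σ :=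
  payoff_le_of_cand_le fun m => by
    by_cases hm : G.owner m = 0
    · rw [combine, if_pos hm]
      exact (valn_eq_cand_self σ m).ge
    · rw [combine, if_neg hm]
      exact cand_le_valn_of_not_improving2 (hσ₂ m) (hσ m _ (Fin.eq_one_of_ne_zero _ hm))

theorem payoff_le_combine (hσ : G.NoImprovingSwitch1 σ) {σ₁ : Fin G.n → ℕ} (hσ₁ : G.Valid σ₁) :
    G.payoff σ ≤ G.payoff (G.combine σ₁ σ) :=
  payoff_le_of_le_cand fun m => by
    by_cases hm : G.owner m = 0
    · rw [combine, if_pos hm]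
      exact valn_le_cand_of_not_improving1 (hσ₁ m) (hσ m _ hm)
    · rw [combine, if_neg hm]
      exact (valn_eq_cand_self σ m).le

theorem isSaddlePointOn_payoff_combine (hσ : G.Valid σ) (hσ₁ : G.NoImprovingSwitch1 σ)
    (hσ₂ : G.NoImprovingSwitch2 σ) (k : Fin G.n) :
    IsSaddlePointOn Set.univ Set.univ
      (fun σ₁ σ₂ : {σ // G.Valid σ} => G.payoff (G.combine σ₁ σ₂) k) ⟨σ, hσ⟩ ⟨σ, hσ⟩ :=
  fun x _ y _ => (payoff_combine_le hσ₂ y.2 k).trans (payoff_le_combine hσ₁ x.2 k)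

theorem optimal_of_noImprovingSwitch (hσ : G.Valid σ) (hσ₁ : G.NoImprovingSwitch1 σ)
    (hσ₂ : G.NoImprovingSwitch2 σ) : G.Optimal1 σ ∧ G.Optimal2 σ := by
  have hsad := isSaddlePointOn_payoff_combine hσ hσ₁ hσ₂
  have hval k := (isSaddlePointOn_iff (Set.mem_univ _) (Set.mem_univ _)).1 (hsad k)
  have hminimax k := isSaddlePointOn_value (Set.mem_univ _) (Set.mem_univ _) (hsad k)
  simp only [iSup_univ, iInf_univ] at hval hminimax
  exact ⟨⟨hσ, fun k => (hval k).1.trans (hminimax k).1.symm⟩,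
    ⟨hσ, fun k => (hval k).2.trans (hminimax k).2.symm⟩⟩

end PricedGame

/-- the strategy iteration algorithm never revisits a strategy profile
(so, the strategy space being finite, it terminates), and a profile with no improving
switches for either player is optimal for both players. -/
theorem strategy_iteration_terminates (G : PricedGame) :
    (∀ f : ℕ → (Fin G.n → ℕ), (∀ t, G.Valid (f t)) →
      (∀ t, G.AlgStep (f t) (f (t + 1))) → ∀ t t', t < t' → f t ≠ f t') ∧
    (∀ σ, G.Valid σ →
      (∀ k j, G.owner k = 0 → ¬ G.Improving1 σ k j) →
      (∀ k j, G.owner k = 1 → ¬ G.Improving2 σ k j) →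
      G.Optimal1 σ ∧ G.Optimal2 σ) :=
  ⟨fun _ hv hrun => (not_forall_algStep hv hrun).elim,
    fun _ hσ h₁ h₂ => optimal_of_noImprovingSwitch hσ h₁ h₂⟩

end PTGpaper
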